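/- arXiv:1510.07322 — 6 statements merged into one kernel-verified Lean document; each statement's English description precedes it below -/
import Mathlib

section
/- The affine plane curve X : u^4 + 16uv^3 + 10v^4 + 16v − 4 = 0 has no rational points; that is, for all u, v ∈ ℚ, u^4 + 16·u·v^3 + 10·v^4 + 16·v − 4 ≠ 0. -/
/-!
Homogenising with `u = x / z`, `v = y / z` turns the curve into the quartic form
`F(x, y, z) = x⁴ + 16xy³ + 10y⁴ + 16yz³ - 4z⁴`, and a rational point would give an integer zero
of `F` with `z ≠ 0`. Reducing `F = 0` modulo 2 forces `x` even, then `y` even (the coefficient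
of `y⁴` is `2 · 5`), then `z` even; since `F(2a, 2b, 2c) = 16 F(a, b, c)`, infinite 2-adic descent
shows that `F` has only the trivial integer zero.
-/

def quarticForm (x y z : ℤ) : ℤ :=
  x ^ 4 + 16 * x * y ^ 3 + 10 * y ^ 4 + 16 * y * z ^ 3 - 4 * z ^ 4

lemma quarticForm_two_mul (a b c : ℤ) :
    quarticForm (2 * a) (2 * b) (2 * c) = 16 * quarticForm a b c := by
  unfold quarticForm; ring

lemma Int.eq_zero_of_forall_pow_dvd {p x : ℤ} (hp : p.natAbs ≠ 1) (h : ∀ k : ℕ, p ^ k ∣ x) :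
    x = 0 := by
  by_contra hx
  obtain ⟨k, hk⟩ := Int.finiteMultiplicity_iff.2 ⟨hp, hx⟩
  exact hk (h _)

lemma two_dvd_of_quarticForm_eq_zero {x y z : ℤ} (h : quarticForm x y z = 0) :
    2 ∣ x ∧ 2 ∣ y ∧ 2 ∣ z := by
  unfold quarticForm at h
  obtain ⟨a, rfl⟩ : 2 ∣ x := Int.prime_two.dvd_of_dvd_pow (n := 4)
    ⟨-8 * x * y ^ 3 - 5 * y ^ 4 - 8 * y * z ^ 3 + 2 * z ^ 4, by linear_combination h⟩
  obtain ⟨b, rfl⟩ : 2 ∣ y := by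
    have h10 : 2 * 2 ∣ 2 * (5 * y ^ 4) :=
      ⟨-4 * a ^ 4 - 8 * a * y ^ 3 - 4 * y * z ^ 3 + z ^ 4, by linear_combination h⟩
    have h5 := (mul_dvd_mul_iff_left two_ne_zero).1 h10
    exact Int.prime_two.dvd_of_dvd_pow ((Int.prime_two.dvd_mul.1 h5).resolve_left (by decide))
  have hz : 2 ∣ z := by
    have h4 : 4 * 2 ∣ 4 * z ^ 4 :=
      ⟨2 * a ^ 4 + 32 * a * b ^ 3 + 20 * b ^ 4 + 4 * b * z ^ 3, by linear_combination -h⟩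
    exact Int.prime_two.dvd_of_dvd_pow ((mul_dvd_mul_iff_left four_ne_zero).1 h4)
  exact ⟨dvd_mul_right 2 a, dvd_mul_right 2 b, hz⟩

lemma pow_two_dvd_of_quarticForm_eq_zero (k : ℕ) :
    ∀ {x y z : ℤ}, quarticForm x y z = 0 → 2 ^ k ∣ x ∧ 2 ^ k ∣ y ∧ 2 ^ k ∣ z := by
  induction k with
  | zero => simp
  | succ k ih =>
    intro x y z h
    obtain ⟨⟨a, rfl⟩, ⟨b, rfl⟩, ⟨c, rfl⟩⟩ := two_dvd_of_quarticForm_eq_zero h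
    rw [quarticForm_two_mul] at h
    obtain ⟨ha, hb, hc⟩ := ih (by linarith)
    simp only [pow_succ']
    exact ⟨mul_dvd_mul_left 2 ha, mul_dvd_mul_left 2 hb, mul_dvd_mul_left 2 hc⟩

lemma eq_zero_of_quarticForm_eq_zero {x y z : ℤ} (h : quarticForm x y z = 0) :
    x = 0 ∧ y = 0 ∧ z = 0 := by
  have hdvd k := pow_two_dvd_of_quarticForm_eq_zero k h
  exact ⟨Int.eq_zero_of_forall_pow_dvd (by decide) fun k ↦ (hdvd k).1,
    Int.eq_zero_of_forall_pow_dvd (by decide) fun k ↦ (hdvd k).2.1,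
    Int.eq_zero_of_forall_pow_dvd (by decide) fun k ↦ (hdvd k).2.2⟩

lemma Rat.exists_eq_div_and_eq_div (u v : ℚ) :
    ∃ x y z : ℤ, z ≠ 0 ∧ u = x / z ∧ v = y / z := by
  refine ⟨u.num * v.den, v.num * u.den, u.den * v.den, by positivity, ?_, ?_⟩
  · push_cast
    rw [mul_div_mul_right _ _ (by positivity), Rat.num_div_den]
  · push_cast
    rw [mul_comm (u.den : ℚ), mul_div_mul_right _ _ (by positivity), Rat.num_div_den]

lemma quarticForm_cast_eq (x y z : ℤ) (hz : z ≠ 0) :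
    (quarticForm x y z : ℚ) = z ^ 4 * ((x / z) ^ 4 + 16 * (x / z) * (y / z) ^ 3
      + 10 * (y / z) ^ 4 + 16 * (y / z) - 4) := by
  unfold quarticForm
  field_simp
  push_cast
  ring

theorem stmt_2 : ∀ u v : ℚ, u ^ 4 + 16 * u * v ^ 3 + 10 * v ^ 4 + 16 * v - 4 ≠ 0 := by
  intro u v h
  obtain ⟨x, y, z, hz, rfl, rfl⟩ := Rat.exists_eq_div_and_eq_div u v
  have hF : (quarticForm x y z : ℚ) = 0 := by rw [quarticForm_cast_eq x y z hz, h, mul_zero]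
  exact hz (eq_zero_of_quarticForm_eq_zero (by exact_mod_cast hF)).2.2
end

section
/- For every real number u there exists a real number v such that u^4 + 16·u·v^3 + 10·v^4 + 16·v − 4 = 0; that is, the u-coordinate map from the real points of the curve X to ℝ is surjective. -/
/-!
For fixed `u`, the quartic `v ↦ p(u, v)` is continuous, so by the intermediate value theorem
it suffices to exhibit a point where it is `≤ 0` and one where it is `≥ 0`.
If `u² ≤ 2` take `v = 0`, where `p = (u² - 2)(u² + 2)`. Otherwise take `v = -u`, where
`p = -5u⁴ - 16u - 4 ≤ -(u² - 2)(5u² + 2) - 8(u + 1)² < 0`.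
At `v = 2|u| + 1` one has `p = u⁴ + v³(10v + 16u) + 16v - 4 ≥ 0`, every summand being nonnegative.
-/

def curvePoly (u v : ℝ) : ℝ :=
  u ^ 4 + 16 * u * v ^ 3 + 10 * v ^ 4 + 16 * v - 4

lemma continuous_curvePoly (u : ℝ) : Continuous (curvePoly u) := by
  unfold curvePoly
  fun_prop

lemma exists_curvePoly_nonpos (u : ℝ) : ∃ v, curvePoly u v ≤ 0 := by
  unfold curvePoly
  rcases le_or_gt (u ^ 2) 2 with hu | hu
  · exact ⟨0, by nlinarith [sq_nonneg u]⟩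
  · exact ⟨-u, by nlinarith [sq_nonneg (u + 1), sq_nonneg u]⟩

lemma curvePoly_nonneg_at_bound (u : ℝ) : 0 ≤ curvePoly u (2 * |u| + 1) := by
  set v := 2 * |u| + 1 with hv
  have hv0 : 0 ≤ v := by positivity
  have hlead : 0 ≤ v ^ 3 * (10 * v + 16 * u) := by
    apply mul_nonneg (pow_nonneg hv0 3)
    linarith [neg_abs_le u, abs_nonneg u]
  have hlin : 0 ≤ 16 * v - 4 := by linarith [abs_nonneg u]
  calc (0 : ℝ) ≤ u ^ 4 + v ^ 3 * (10 * v + 16 * u) + (16 * v - 4) := by positivity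
    _ = curvePoly u v := by unfold curvePoly; ring

theorem stmt_5 : ∀ u : ℝ, ∃ v : ℝ,
    u ^ 4 + 16 * u * v ^ 3 + 10 * v ^ 4 + 16 * v - 4 = 0 := by
  intro u
  obtain ⟨a, ha⟩ := exists_curvePoly_nonpos u
  obtain ⟨v, hv⟩ := intermediate_value_univ a (2 * |u| + 1) (continuous_curvePoly u)
    ⟨ha, curvePoly_nonneg_at_bound u⟩
  exact ⟨v, hv⟩
end

section
/- There exists ε > 0 such that for every real number t with |t| < ε, the curve Y_t has no real points; that is, for all real x, y: x^4 + y^4 + 1 + t·(x^4 + x·y^3 + y + 1) ≠ 0. -/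
/-!
The perturbation `x ^ 4 + x * y ^ 3 + y + 1` is dominated by twice the positive quartic
`x ^ 4 + y ^ 4 + 1` (AM-GM on `x * y ^ 3` and on `y`), so for `|t| < 1 / 2` the perturbed
quartic stays positive everywhere.
-/

section OrderedRing

variable {R : Type*} [CommRing R] [LinearOrder R] [IsStrictOrderedRing R]

theorem abs_mul_pow_three_le (x y : R) : |x * y ^ 3| ≤ x ^ 4 + y ^ 4 := by
  rw [abs_le]
  constructor <;> nlinarith [sq_nonneg (x ^ 2 - y ^ 2), sq_nonneg (x * y + y ^ 2),
    sq_nonneg (x * y - y ^ 2), sq_nonneg (x ^ 2 + y ^ 2)]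

theorem abs_le_pow_four_add_one (y : R) : |y| ≤ y ^ 4 + 1 := by
  rw [abs_le]
  constructor <;> nlinarith [sq_nonneg (y ^ 2 - 1), sq_nonneg (y + 1), sq_nonneg (y - 1)]

theorem abs_perturbation_le (x y : R) :
    |x ^ 4 + x * y ^ 3 + y + 1| ≤ 2 * (x ^ 4 + y ^ 4 + 1) := by
  calc |x ^ 4 + x * y ^ 3 + y + 1| ≤ |x ^ 4| + |x * y ^ 3| + |y| + |1| :=
        (abs_add_le _ _).trans <| by
          gcongr
          exact (abs_add_le _ _).trans <| by gcongr; exact abs_add_le _ _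
    _ ≤ x ^ 4 + (x ^ 4 + y ^ 4) + (y ^ 4 + 1) + 1 := by
        rw [abs_of_nonneg (by positivity : (0 : R) ≤ x ^ 4), abs_one]
        gcongr
        exacts [abs_mul_pow_three_le x y, abs_le_pow_four_add_one y]
    _ = 2 * (x ^ 4 + y ^ 4 + 1) := by ring

theorem add_mul_pos_of_abs_le {q p t C : R} (hq : 0 < q) (hp : |p| ≤ C * q)
    (ht : |t| * C < 1) : 0 < q + t * p := by
  have hlt : |t * p| < q :=
    calc |t * p| = |t| * |p| := abs_mul t p
      _ ≤ |t| * (C * q) := by gcongr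
      _ = |t| * C * q := by ring
      _ < 1 * q := by gcongr
      _ = q := one_mul q
  linarith [neg_abs_le (t * p)]

end OrderedRing

theorem stmt_6 : ∃ ε : ℝ, 0 < ε ∧ ∀ t : ℝ, |t| < ε → ∀ x y : ℝ,
    x ^ 4 + y ^ 4 + 1 + t * (x ^ 4 + x * y ^ 3 + y + 1) ≠ 0 := by
  refine ⟨1 / 2, by norm_num, fun t ht x y => ?_⟩
  refine (add_mul_pos_of_abs_le (by positivity) (abs_perturbation_le x y) ?_).ne'
  linarith
end

section
/- For every real number t with t ≥ 20, the curve Y_t has a real point whose x-coordinate lies in the closed interval [1,2]; that is, there exist real x, y with 1 ≤ x ≤ 2 and x^4 + y^4 + 1 + t·(x^4 + x·y^3 + y + 1) = 0. -/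
/-! At `x = 1` the equation reads `y ^ 4 + t * y ^ 3 + t * y + 2 * t + 2 = 0`. This quartic takes
the value `18 - 8 * t < 0` at `y = -2` and `(t + 1) * (t ^ 2 + t + 3) > 0` at `y = -(t + 1)`, so it
has a root in between by the intermediate value theorem. -/

theorem stmt_7 : ∀ t : ℝ, 20 ≤ t → ∃ x y : ℝ, 1 ≤ x ∧ x ≤ 2 ∧
    x ^ 4 + y ^ 4 + 1 + t * (x ^ 4 + x * y ^ 3 + y + 1) = 0 := by
  intro t ht
  let f : ℝ → ℝ := fun y => y ^ 4 + t * y ^ 3 + t * y + 2 * t + 2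
  have hf_neg : f (-2) ≤ 0 := by simp only [f]; linarith
  have hf_pos : 0 ≤ f (-(t + 1)) := by
    have : f (-(t + 1)) = (t + 1) * (t ^ 2 + t + 3) := by simp only [f]; ring
    rw [this]
    positivity
  obtain ⟨y, -, hy⟩ := intermediate_value_Icc' (show -(t + 1) ≤ -2 by linarith)
    (by fun_prop : Continuous f).continuousOn ⟨hf_neg, hf_pos⟩
  refine ⟨1, y, le_rfl, one_le_two, ?_⟩
  simp only [f] at hy
  linear_combination hy
end

section
/- There is no faithful functor from the category of simple graphs on the vertex set ℕ (with graph embeddings as morphisms) to the category of linear orders (with monotone maps as morphisms). -/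
/-!
A monotone involution of a linear order is the identity, so every functor to `LinOrd` sends
involutions to identities. The complete graph on `ℕ` has the nontrivial involution swapping
the vertices `0` and `1`, so no such functor is faithful.
-/

open CategoryTheory

/-- The category of simple graphs with vertex set ℕ, with graph embeddings
(isomorphisms onto induced subgraphs) as morphisms. -/
def NatGraphCat : Type := SimpleGraph ℕ

instance : Category NatGraphCat where
  Hom G H := (G : SimpleGraph ℕ) ↪g (H : SimpleGraph ℕ)
  id G := SimpleGraph.Embedding.refl
  comp f g := g.comp f
  id_comp f := RelEmbedding.ext fun _ => rfl
  comp_id f := RelEmbedding.ext fun _ => rfl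
  assoc f g h := RelEmbedding.ext fun _ => rfl

theorem Monotone.eq_id_of_involutive {α : Type*} [LinearOrder α] {f : α → α}
    (hf : Monotone f) (hinv : Function.Involutive f) : f = id := by
  funext x
  rcases le_total (f x) x with h | h
  · exact h.antisymm ((hinv x).symm.trans_le (hf h))
  · exact ((hf h).trans_eq (hinv x)).antisymm h

theorem LinOrd.eq_id_of_comp_self_eq_id {X : LinOrd} {f : X ⟶ X} (hf : f ≫ f = 𝟙 X) :
    f = 𝟙 X := by
  have hinv : Function.Involutive f := fun x => by
    rw [← LinOrd.comp_apply, hf, LinOrd.id_apply]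
  ext x
  exact congrFun (f.hom.monotone.eq_id_of_involutive hinv) x

theorem CategoryTheory.Functor.not_faithful_linOrd_of_comp_self_eq_id {C : Type*} [Category C]
    (F : C ⥤ LinOrd) {X : C} {f : X ⟶ X} (hf : f ≫ f = 𝟙 X) (hne : f ≠ 𝟙 X) :
    ¬ F.Faithful := by
  intro hF
  have hFf : F.map f = 𝟙 (F.obj X) :=
    LinOrd.eq_id_of_comp_self_eq_id (by rw [← F.map_comp, hf, F.map_id])
  exact hne (F.map_injective (by rw [hFf, F.map_id]))

namespace NatGraphCat

def complete : NatGraphCat := SimpleGraph.completeGraph ℕ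

def swapZeroOne : complete ⟶ complete :=
  (SimpleGraph.Iso.completeGraph (Equiv.swap 0 1)).toEmbedding

theorem swapZeroOne_comp_self : swapZeroOne ≫ swapZeroOne = 𝟙 complete :=
  RelEmbedding.ext fun x => Equiv.swap_apply_self 0 1 x

theorem swapZeroOne_ne_id : swapZeroOne ≠ 𝟙 complete := fun h => by
  have h0 : Equiv.swap (0 : ℕ) 1 0 = 0 := RelEmbedding.ext_iff.mp h 0
  simp at h0

end NatGraphCat

/-- There is no faithful functor from the category of simple graphs on ℕ to the
category of linear orders with monotone maps. -/
theorem stmt_9 : ∀ F : NatGraphCat ⥤ LinOrd, ¬ F.Faithful := fun F =>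
  F.not_faithful_linOrd_of_comp_self_eq_id NatGraphCat.swapZeroOne_comp_self
    NatGraphCat.swapZeroOne_ne_id
end

section
/- The polynomial u^4 + 16uv^3 + 10v^4 + 16v − 4, regarded as a polynomial in two variables over the algebraic closure of ℚ, is irreducible; that is, the curve X : u^4 + 16uv^3 + 10v^4 + 16v − 4 = 0 is geometrically integral over ℚ. -/
/-!
View `p` as a monic quartic in `u` over `K[v]` with no `u³`, `u²` terms: `u⁴ + e u + f` with
`e = 16 v³` and `f = 10 v⁴ + 16 v - 4`. A factorisation into monic factors gives either a root
`t ∈ K[v]`, or two quadratics `u² + a u + b` and `u² - a u + d`, and then `b + d = a²`,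
`a (d - b) = e`, `b d = f` force the resolvent equation `a⁶ - 4 f a² - e² = 0`.
Comparing degrees in `v` forces `t` and `a` to be of degree at most one, and a few
coefficients then rule both out.
-/

namespace Polynomial

variable {R : Type*} [CommRing R]

lemma Monic.eq_X_sq_add_C_mul_X_add_C {p : R[X]} (hp : p.Monic) (h : p.natDegree = 2) :
    p = X ^ 2 + C (p.coeff 1) * X + C (p.coeff 0) := by
  conv_lhs => rw [hp.as_sum, h]
  simp only [Finset.sum_range_succ, Finset.range_one, Finset.sum_singleton, pow_zero, mul_one,
    pow_one]
  ring

lemma resolvent_eq_zero_of_mul_eq {a b c d e f : R}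
    (h : (X ^ 2 + C a * X + C b) * (X ^ 2 + C c * X + C d) = X ^ 4 + C e * X + C f) :
    a ^ 6 - 4 * f * a ^ 2 - e ^ 2 = 0 := by
  have hE : C (a + c) * X ^ 3 + C (b + d + a * c) * X ^ 2 + C (a * d + b * c - e) * X
      + C (b * d - f) = 0 := by
    simp only [map_add, map_mul, map_sub]
    linear_combination h
  have h3 := congrArg (coeff · 3) hE
  have h2 := congrArg (coeff · 2) hE
  have h1 := congrArg (coeff · 1) hE
  have h0 := congrArg (coeff · 0) hE
  simp only [coeff_add, coeff_C_mul_X_pow, coeff_C_mul_X, coeff_C, coeff_zero] at h3 h2 h1 h0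
  norm_num at h3 h2 h1 h0
  linear_combination 4 * a ^ 2 * h0 + (a * d + b * c + e) * h1
    + (a ^ 3 * (a ^ 2 + b + d) - b * (2 * a * d + b * c - a * b)) * h3
    - a ^ 2 * (a ^ 2 + b + d) * h2

theorem irreducible_X_pow_four_add_C_mul_X_add_C [IsDomain R] {e f : R}
    (hroot : ∀ t : R, t ^ 4 + e * t + f ≠ 0)
    (hres : ∀ a : R, a ^ 6 - 4 * f * a ^ 2 - e ^ 2 ≠ 0) :
    Irreducible (X ^ 4 + C e * X + C f : R[X]) := by
  have hdeg : (X ^ 4 + C e * X + C f : R[X]).natDegree = 4 := by compute_degree!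
  have hmonic : (X ^ 4 + C e * X + C f : R[X]).Monic := by monicity!
  refine hmonic.irreducible_iff_natDegree'.mpr ⟨fun h1 => by simp [h1] at hdeg, ?_⟩
  intro g h hg hh hgh hdegh
  rw [hdeg, Finset.mem_Ioc] at hdegh
  obtain hlin | hquad : h.natDegree = 1 ∨ h.natDegree = 2 := by omega
  · obtain ⟨c, rfl⟩ : ∃ c, h = X + C c := ⟨_, hh.eq_X_add_C hlin⟩
    have hroot' := congrArg (eval (-c)) hgh
    simp only [eval_mul, eval_add, eval_X, eval_C, eval_pow, neg_add_cancel, mul_zero] at hroot'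
    exact hroot (-c) (by linear_combination -hroot')
  · have hg2 : g.natDegree = 2 := by
      have := hg.natDegree_mul hh
      rw [hgh, hdeg] at this
      omega
    rw [hg.eq_X_sq_add_C_mul_X_add_C hg2, hh.eq_X_sq_add_C_mul_X_add_C hquad] at hgh
    exact hres _ (resolvent_eq_zero_of_mul_eq hgh)

end Polynomial

section Curve

open Polynomial

variable {K : Type*} [Field K] [CharZero K]

lemma curve_quartic_ne_zero (t : K[X]) :
    t ^ 4 + 16 * X ^ 3 * t + (10 * X ^ 4 + 16 * X - 4) ≠ 0 := by
  intro h
  have hdeg : 4 * t.natDegree ≤ max (3 + t.natDegree) 4 := by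
    rw [← natDegree_pow, show t ^ 4 = -(16 * X ^ 3 * t + (10 * X ^ 4 + 16 * X - 4)) by
      linear_combination h, natDegree_neg]
    compute_degree
  obtain ⟨a, b, rfl⟩ := exists_eq_X_add_C_of_natDegree_le_one (by omega : t.natDegree ≤ 1)
  have hE : C (a ^ 4 + 16 * a + 10) * X ^ 4 + C (4 * a ^ 3 * b + 16 * b) * X ^ 3
      + C (6 * a ^ 2 * b ^ 2) * X ^ 2 + C (4 * a * b ^ 3 + 16) * X + C (b ^ 4 - 4) = 0 := by
    simp only [map_add, map_mul, map_pow, map_sub, map_ofNat]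
    linear_combination h
  have h2 := congrArg (coeff · 2) hE
  have h1 := congrArg (coeff · 1) hE
  simp only [coeff_add, coeff_C_mul_X_pow, coeff_C_mul_X, coeff_C, coeff_zero] at h2 h1
  norm_num at h2 h1
  rcases h2 with rfl | rfl <;> norm_num at h1

lemma curve_resolvent_ne_zero (a : K[X]) :
    a ^ 6 - 4 * (10 * X ^ 4 + 16 * X - 4) * a ^ 2 - (16 * X ^ 3) ^ 2 ≠ 0 := by
  intro h
  have hdeg : 6 * a.natDegree ≤ max (4 + 2 * a.natDegree) 6 := by
    rw [← natDegree_pow, show a ^ 6 = 4 * (10 * X ^ 4 + 16 * X - 4) * a ^ 2 + (16 * X ^ 3) ^ 2 by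
      linear_combination h]
    compute_degree
  obtain ⟨α, β, rfl⟩ := exists_eq_X_add_C_of_natDegree_le_one (by omega : a.natDegree ≤ 1)
  have hE : C (α ^ 6 - 40 * α ^ 2 - 256) * X ^ 6 + C (6 * α ^ 5 * β - 80 * α * β) * X ^ 5
      + C (15 * α ^ 4 * β ^ 2 - 40 * β ^ 2) * X ^ 4
      + C (20 * α ^ 3 * β ^ 3 - 64 * α ^ 2) * X ^ 3
      + C (15 * α ^ 2 * β ^ 4 - 128 * α * β + 16 * α ^ 2) * X ^ 2
      + C (6 * α * β ^ 5 - 64 * β ^ 2 + 32 * α * β) * X + C (β ^ 6 + 16 * β ^ 2) = 0 := by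
    simp only [map_add, map_mul, map_pow, map_sub, map_ofNat]
    linear_combination h
  have h6 := congrArg (coeff · 6) hE
  have h5 := congrArg (coeff · 5) hE
  have h4 := congrArg (coeff · 4) hE
  have h3 := congrArg (coeff · 3) hE
  simp only [coeff_add, coeff_C_mul_X_pow, coeff_C_mul_X, coeff_C, coeff_zero] at h6 h5 h4 h3
  norm_num at h6 h5 h4 h3
  have hα : α ≠ 0 := by rintro rfl; norm_num at h6
  have hβ : β ≠ 0 := by rintro rfl; simp [hα] at h3
  have h4' : 15 * α ^ 4 - 40 = 0 :=
    (mul_eq_zero.mp (by linear_combination h4 : β ^ 2 * (15 * α ^ 4 - 40) = 0)).resolve_left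
      (pow_ne_zero 2 hβ)
  have h5' : 6 * α ^ 4 - 80 = 0 :=
    (mul_eq_zero.mp (by linear_combination h5 : α * β * (6 * α ^ 4 - 80) = 0)).resolve_left
      (mul_ne_zero hα hβ)
  have : (960 : K) = 0 := by linear_combination 6 * h4' - 15 * h5'
  norm_num at this

theorem irreducible_curve_quartic :
    Irreducible (X ^ 4 + C (16 * X ^ 3) * X + C (10 * X ^ 4 + 16 * X - 4) : K[X][X]) :=
  irreducible_X_pow_four_add_C_mul_X_add_C curve_quartic_ne_zero curve_resolvent_ne_zero

end Curve

open MvPolynomial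

theorem stmt_12 :
    Irreducible (X 0 ^ 4 + 16 * X 0 * X 1 ^ 3 + 10 * X 1 ^ 4 + 16 * X 1 - 4 :
      MvPolynomial (Fin 2) (AlgebraicClosure ℚ)) := by
  let E := (renameEquiv (AlgebraicClosure ℚ) (Equiv.swap (0 : Fin 2) 1)).trans
    (Polynomial.Bivariate.equivMvPolynomial (AlgebraicClosure ℚ)).symm
  have himage : E (X 0 ^ 4 + 16 * X 0 * X 1 ^ 3 + 10 * X 1 ^ 4 + 16 * X 1 - 4) =
      .X ^ 4 + .C (16 * .X ^ 3) * .X + .C (10 * .X ^ 4 + 16 * .X - 4) := by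
    simp only [E, AlgEquiv.trans_apply, map_add, map_sub, map_mul, map_pow, map_ofNat,
      renameEquiv_apply, rename_X, Equiv.swap_apply_left, Equiv.swap_apply_right,
      Polynomial.Bivariate.equivMvPolynomial_symm_X_0,
      Polynomial.Bivariate.equivMvPolynomial_symm_X_1]
    ring
  exact (MulEquiv.irreducible_iff E).mp (himage ▸ irreducible_curve_quartic)
end
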